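/- arXiv:1108.2735 — 2 statements merged into one kernel-verified Lean document; each statement's English description precedes it below -/
import Mathlib

section
/- Let T > 0, f ∈ L¹(0,T) nonnegative, and φ : [0,T] → [0,∞) absolutely continuous with φ(0) = 0 such that, for every sufficiently large p (with f independent of p), φ'(t) ≤ p f(t) φ(t)^{1−1/p} for a.e. t ∈ [0,T]. Then φ ≡ 0 on [0,T]. -/
open MeasureTheory Set intervalIntegral Filter Topology

lemma aux_rpow_step {x y q : ℝ} (hx : 0 < x) (hxy : x ≤ y) (hq : 1 ≤ q) :
    x ^ q * (y - x) ≤ (y ^ (q+1) - x ^ (q+1)) / (q+1) := by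
  rcases eq_or_lt_of_le hxy with rfl | hlt
  · simp
  · have hq1 : (0:ℝ) < q + 1 := by linarith
    have hcont : ContinuousOn (fun z : ℝ => z ^ (q+1)) (Icc x y) := by
      intro z _
      exact (Real.continuousAt_rpow_const z (q+1) (Or.inr hq1.le)).continuousWithinAt
    have hderiv : ∀ z ∈ Ioo x y, HasDerivAt (fun z : ℝ => z ^ (q+1)) ((q+1) * z ^ q) z := by
      intro z hz
      have := Real.hasDerivAt_rpow_const (x := z) (p := q+1) (Or.inl (ne_of_gt (hx.trans hz.1)))
      simpa [add_sub_cancel_right] using this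
    obtain ⟨c, hc, hslope⟩ := exists_hasDerivAt_eq_slope _ _ hlt hcont hderiv
    have hcx : x ^ q ≤ c ^ q := Real.rpow_le_rpow hx.le hc.1.le (by linarith)
    have hyx : 0 < y - x := by linarith
    have heq : y ^ (q+1) - x ^ (q+1) = (q+1) * c ^ q * (y - x) := by
      field_simp at hslope
      linarith [hslope]
    rw [le_div_iff₀ hq1]
    nlinarith [mul_le_mul_of_nonneg_right hcx hyx.le]

lemma key_integral (f : ℝ → ℝ) (a b c q : ℝ) (hab : a ≤ b) (hc : 0 < c) (hq : 1 ≤ q)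
    (hf0 : ∀ x, 0 ≤ f x) (hfi : ∀ x y, IntervalIntegrable f volume x y) :
    (∫ s in a..b, f s * (c + ∫ u in a..s, f u) ^ q)
      ≤ ((c + ∫ u in a..b, f u) ^ (q+1) - c ^ (q+1)) / (q+1) := by
  have hq0 : (0:ℝ) < q := lt_of_lt_of_le zero_lt_one hq
  set F : ℝ → ℝ := fun x => c + ∫ u in a..x, f u with hFdef
  have hFcont : Continuous F :=
    continuous_const.add (intervalIntegral.continuous_primitive hfi a)
  have hFa : F a = c := by simp [hFdef]
  have hFdiff : ∀ x y, F y - F x = ∫ u in x..y, f u := by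
    intro x y
    have h1 : (∫ u in a..x, f u) + ∫ u in x..y, f u = ∫ u in a..y, f u :=
      intervalIntegral.integral_add_adjacent_intervals (hfi a x) (hfi x y)
    simp only [hFdef]
    linarith
  have hFmono : ∀ x y, x ≤ y → F x ≤ F y := by
    intro x y hxy
    have h2 : 0 ≤ ∫ u in x..y, f u :=
      intervalIntegral.integral_nonneg hxy (fun u _ => hf0 u)
    have := hFdiff x y
    linarith
  have hFpos : ∀ x, a ≤ x → 0 < F x := fun x hx => lt_of_lt_of_le (hFa ▸ hc) (hFmono a x hx)
  have hFqcont : Continuous fun s => F s ^ q := by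
    rw [continuous_iff_continuousAt]
    intro s
    exact (Real.continuousAt_rpow_const (F s) q (Or.inr hq0.le)).comp hFcont.continuousAt
  have hint : ∀ x y, IntervalIntegrable (fun s => f s * F s ^ q) volume x y := by
    intro x y
    exact (hfi x y).mul_continuousOn hFqcont.continuousOn
  -- the goal in terms of F
  show (∫ s in a..b, f s * F s ^ q) ≤ (F b ^ (q+1) - c ^ (q+1)) / (q+1)
  refine le_of_forall_pos_le_add ?_
  intro ε hε
  set C : ℝ := F b ^ q + 1 with hCdef
  have hC : 0 < C := by
    have : 0 < F b ^ q := Real.rpow_pos_of_pos (hFpos b hab) q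
    positivity
  set ε' : ℝ := ε / C with hε'def
  have hε' : 0 < ε' := div_pos hε hC
  -- uniform continuity
  have hUC := (isCompact_Icc (a := a) (b := b)).uniformContinuousOn_of_continuous
    hFcont.continuousOn
  obtain ⟨δ, hδ, hδ'⟩ := Metric.uniformContinuousOn_iff.1 hUC ε' hε'
  obtain ⟨n, hn⟩ := exists_nat_gt ((b - a) / δ)
  have hba : 0 ≤ b - a := by linarith
  have hn0 : 0 < (n:ℝ) := lt_of_le_of_lt (div_nonneg hba hδ.le) hn
  set t : ℕ → ℝ := fun i => a + i * ((b - a) / n) with htdef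
  have ht0 : t 0 = a := by simp [htdef]
  have htn : t n = b := by
    simp only [htdef]
    field_simp
    ring
  have hstep' : ∀ i : ℕ, t (i+1) = t i + (b - a) / n := by
    intro i; simp only [htdef]; push_cast; ring
  have hstepnn : 0 ≤ (b - a) / n := div_nonneg hba hn0.le
  have hstep : ∀ i : ℕ, t (i+1) - t i = (b - a) / n := by
    intro i; rw [hstep' i]; ring
  have htmono : ∀ i, t i ≤ t (i+1) := fun i => by rw [hstep' i]; linarith
  have htIcc : ∀ i : ℕ, i ≤ n → t i ∈ Icc a b := by
    intro i hi
    constructor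
    · have h0 : (0:ℝ) ≤ (i:ℝ) * ((b - a) / n) :=
        mul_nonneg (Nat.cast_nonneg i) hstepnn
      simp only [htdef]; linarith
    · have : (i:ℝ) * ((b-a)/n) ≤ (n:ℝ) * ((b-a)/n) := by
        apply mul_le_mul_of_nonneg_right _ hstepnn
        exact_mod_cast hi
      have h2 : (n:ℝ) * ((b-a)/n) = b - a := by field_simp
      simp only [htdef]; linarith
  have hstepδ : (b - a) / n < δ := by
    rw [div_lt_iff₀ hn0]
    rw [div_lt_iff₀ hδ] at hn
    nlinarith
  have hΔF : ∀ i : ℕ, i < n → F (t (i+1)) - F (t i) ≤ ε' := by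
    intro i hi
    have h1 := hδ' (t (i+1)) (htIcc (i+1) hi) (t i) (htIcc i hi.le)
    rw [Real.dist_eq, Real.dist_eq] at h1
    have h2 : |t (i+1) - t i| < δ := by rw [hstep i, abs_of_nonneg hstepnn]; exact hstepδ
    have := h1 h2
    have := abs_lt.1 this
    linarith [this.2]
  -- splitting
  have hsplit : ∑ i ∈ Finset.range n, ∫ s in t i..t (i+1), f s * F s ^ q
      = ∫ s in a..b, f s * F s ^ q := by
    have := intervalIntegral.sum_integral_adjacent_intervals
      (a := t) (n := n) (μ := volume) (f := fun s => f s * F s ^ q) (fun i _ => hint _ _)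
    rwa [ht0, htn] at this
  -- per-piece bound
  have hpiece : ∀ i : ℕ, i < n →
      (∫ s in t i..t (i+1), f s * F s ^ q)
        ≤ (F (t (i+1)) ^ (q+1) - F (t i) ^ (q+1)) / (q+1)
          + ε' * (F (t (i+1)) ^ q - F (t i) ^ q) := by
    intro i hi
    have hai : a ≤ t i := (htIcc i hi.le).1
    have h1 : (∫ s in t i..t (i+1), f s * F s ^ q)
        ≤ ∫ s in t i..t (i+1), f s * F (t (i+1)) ^ q := by
      apply intervalIntegral.integral_mono_on (htmono i) (hint _ _)
        ((hfi _ _).mul_const _)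
      intro s hs
      apply mul_le_mul_of_nonneg_left _ (hf0 s)
      exact Real.rpow_le_rpow (hFpos s (hai.trans hs.1)).le (hFmono _ _ hs.2) hq0.le
    have h2 : (∫ s in t i..t (i+1), f s * F (t (i+1)) ^ q)
        = F (t (i+1)) ^ q * (F (t (i+1)) - F (t i)) := by
      rw [intervalIntegral.integral_mul_const, hFdiff (t i) (t (i+1))]
      ring
    set x := F (t i)
    set y := F (t (i+1))
    have hx : 0 < x := hFpos _ hai
    have hxy : x ≤ y := hFmono _ _ (htmono i)
    have h3 : x ^ q * (y - x) ≤ (y ^ (q+1) - x ^ (q+1)) / (q+1) := aux_rpow_step hx hxy hq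
    have h4 : x ^ q ≤ y ^ q := Real.rpow_le_rpow hx.le hxy hq0.le
    have h5 : y - x ≤ ε' := hΔF i hi
    have h6 : (y ^ q - x ^ q) * (y - x) ≤ (y ^ q - x ^ q) * ε' :=
      mul_le_mul_of_nonneg_left h5 (by linarith)
    have hyx : 0 ≤ y - x := by linarith
    calc (∫ s in t i..t (i+1), f s * F s ^ q) ≤ y ^ q * (y - x) := by rw [← h2]; exact h1
      _ = x ^ q * (y - x) + (y ^ q - x ^ q) * (y - x) := by ring
      _ ≤ (y ^ (q+1) - x ^ (q+1)) / (q+1) + ε' * (y ^ q - x ^ q) := by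
          rw [mul_comm ε' _]; exact add_le_add h3 h6
  -- sum up
  have hsum : (∫ s in a..b, f s * F s ^ q)
      ≤ (F b ^ (q+1) - F a ^ (q+1)) / (q+1) + ε' * (F b ^ q - F a ^ q) := by
    rw [← hsplit]
    calc (∑ i ∈ Finset.range n, ∫ s in t i..t (i+1), f s * F s ^ q)
        ≤ ∑ i ∈ Finset.range n, ((F (t (i+1)) ^ (q+1) - F (t i) ^ (q+1)) / (q+1)
            + ε' * (F (t (i+1)) ^ q - F (t i) ^ q)) :=
          Finset.sum_le_sum (fun i hi => hpiece i (Finset.mem_range.1 hi))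
      _ = (∑ i ∈ Finset.range n, (F (t (i+1)) ^ (q+1) - F (t i) ^ (q+1))) / (q+1)
            + ε' * ∑ i ∈ Finset.range n, (F (t (i+1)) ^ q - F (t i) ^ q) := by
          rw [Finset.sum_add_distrib, Finset.sum_div, Finset.mul_sum]
      _ = (F (t n) ^ (q+1) - F (t 0) ^ (q+1)) / (q+1)
            + ε' * (F (t n) ^ q - F (t 0) ^ q) := by
          rw [Finset.sum_range_sub (fun i => F (t i) ^ (q+1)),
            Finset.sum_range_sub (fun i => F (t i) ^ q)]
      _ = (F b ^ (q+1) - F a ^ (q+1)) / (q+1) + ε' * (F b ^ q - F a ^ q) := by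
          rw [ht0, htn]
  have hfinal : ε' * (F b ^ q - F a ^ q) ≤ ε := by
    have h1 : F b ^ q - F a ^ q ≤ C := by
      have : 0 < F a ^ q := Real.rpow_pos_of_pos (hFpos a le_rfl) q
      simp only [hCdef]; linarith
    have h2 : ε' * (F b ^ q - F a ^ q) ≤ ε' * C := mul_le_mul_of_nonneg_left h1 hε'.le
    have h3 : ε' * C = ε := by rw [hε'def]; field_simp
    linarith
  rw [hFa] at hsum hfinal
  linarith

lemma zero_of_small (f g φ : ℝ → ℝ) (a b p₀ : ℝ) (hab : a ≤ b) (hp₀ : 2 ≤ p₀)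
    (hf0 : ∀ x, 0 ≤ f x) (hφ0 : ∀ x, 0 ≤ φ x)
    (hfi : ∀ x y, IntervalIntegrable f volume x y)
    (hgi : ∀ x y, IntervalIntegrable g volume x y)
    (hφ : ∀ t, φ t = ∫ s in a..t, g s)
    (hsmall : (∫ s in a..b, f s) ≤ 1/2)
    (hineq : ∀ p : ℝ, p₀ ≤ p → ∀ᵐ s, g s ≤ p * f s * φ s ^ (1 - 1/p)) :
    ∀ t ∈ Icc a b, φ t = 0 := by
  have hφcont : Continuous φ := by
    have h : φ = fun t => ∫ s in a..t, g s := funext hφ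
    rw [h]
    exact intervalIntegral.continuous_primitive hgi a
  set F : ℝ → ℝ := fun x => ∫ u in a..x, f u with hFdef
  have hFcont : Continuous F := intervalIntegral.continuous_primitive hfi a
  have hFa : F a = 0 := by simp [hFdef]
  have hFmono : ∀ x y, x ≤ y → F x ≤ F y := by
    intro x y hxy
    have h1 : F x + ∫ u in x..y, f u = F y :=
      intervalIntegral.integral_add_adjacent_intervals (hfi a x) (hfi x y)
    have h2 : 0 ≤ ∫ u in x..y, f u :=
      intervalIntegral.integral_nonneg hxy (fun u _ => hf0 u)
    linarith
  have hF0 : ∀ x, a ≤ x → 0 ≤ F x := fun x hx => hFa ▸ hFmono a x hx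
  -- main bound for each p
  have hkey : ∀ p : ℝ, p₀ ≤ p → ∀ t ∈ Icc a b, φ t ≤ (3/4 : ℝ) ^ p := by
    intro p hp t ht
    have hp2 : (2:ℝ) ≤ p := hp₀.trans hp
    have hppos : (0:ℝ) < p := by linarith
    have he : (0:ℝ) < 1 - 1/p := by
      have : 1/p ≤ 1/2 := by
        rw [div_le_div_iff₀ hppos (by norm_num)]
        linarith
      linarith
    set G : ℝ → ℝ := fun x => (1/4 + F x) ^ p with hGdef
    have hGcont : Continuous G := by
      rw [continuous_iff_continuousAt]
      intro s
      exact (Real.continuousAt_rpow_const _ p (Or.inr hppos.le)).comp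
        (continuous_const.add hFcont).continuousAt
    have hGpos : ∀ x, a ≤ x → 0 < G x := by
      intro x hx
      exact Real.rpow_pos_of_pos (by have := hF0 x hx; linarith) p
    have hφa : φ a = 0 := by rw [hφ a, intervalIntegral.integral_same]
    -- claim : φ < G on [a,b]
    have hlt : ∀ t ∈ Icc a b, φ t < G t := by
      by_contra hcon
      push_neg at hcon
      obtain ⟨t₁, ht₁, hGle⟩ := hcon
      set U : Set ℝ := Icc a b ∩ {x | G x ≤ φ x} with hUdef
      have hUne : U.Nonempty := ⟨t₁, ht₁, hGle⟩
      have hUclosed : IsClosed U := isClosed_Icc.inter (isClosed_le hGcont hφcont)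
      have hUbdd : BddBelow U := ⟨a, fun x hx => hx.1.1⟩
      set m := sInf U with hmdef
      have hmU : m ∈ U := hUclosed.csInf_mem hUne hUbdd
      have hma : a ≤ m := hmU.1.1
      have hmb : m ≤ b := hmU.1.2
      have hGφm : G m ≤ φ m := hmU.2
      have ham : a < m := by
        rcases eq_or_lt_of_le hma with heq | hlt'
        · exfalso
          rw [← heq] at hGφm
          have : (0:ℝ) < G a := hGpos a le_rfl
          rw [hφa] at hGφm
          linarith
        · exact hlt'
      have hnotmem : ∀ s, a ≤ s → s < m → φ s < G s := by
        intro s hs hsm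
        by_contra h
        push_neg at h
        have hsU : s ∈ U := ⟨⟨hs, hsm.le.trans hmb⟩, h⟩
        exact absurd (csInf_le hUbdd hsU) (not_le.2 hsm)
      have hφmG : φ m ≤ G m := by
        have htend : Tendsto (fun x => φ x - G x) (𝓝[<] m) (𝓝 (φ m - G m)) :=
          ((hφcont.sub hGcont).tendsto m).mono_left nhdsWithin_le_nhds
        have hev : ∀ᶠ x in 𝓝[<] m, φ x - G x ≤ 0 := by
          filter_upwards [Ioo_mem_nhdsLT_of_mem (Set.mem_Ioc.2 ⟨ham, le_rfl⟩)] with x hx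
          exact sub_nonpos.2 (hnotmem x hx.1.le hx.2).le
        have := le_of_tendsto htend hev
        linarith
      have hle : ∀ s ∈ Icc a m, φ s ≤ G s := by
        intro s hs
        rcases lt_or_eq_of_le hs.2 with hsm | hsm
        · exact (hnotmem s hs.1 hsm).le
        · rw [hsm]; exact hφmG
      -- integral estimate at m
      have hintR : IntervalIntegrable (fun s => p * f s * φ s ^ (1 - 1/p)) volume a m := by
        have h1 : (fun s => p * f s * φ s ^ (1 - 1/p))
            = fun s => f s * (p * φ s ^ (1 - 1/p)) := by funext s; ring
        rw [h1]
        apply (hfi a m).mul_continuousOn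
        apply Continuous.continuousOn
        apply continuous_const.mul
        rw [continuous_iff_continuousAt]
        intro s
        exact (Real.continuousAt_rpow_const _ _ (Or.inr he.le)).comp hφcont.continuousAt
      have hintR2 : IntervalIntegrable (fun s => p * (f s * (1/4 + F s) ^ (p-1))) volume a m := by
        apply IntervalIntegrable.const_mul
        apply (hfi a m).mul_continuousOn
        apply Continuous.continuousOn
        rw [continuous_iff_continuousAt]
        intro s
        exact (Real.continuousAt_rpow_const _ _ (Or.inr (by linarith : (0:ℝ) ≤ p - 1))).comp
          (continuous_const.add hFcont).continuousAt
      have h1 : φ m ≤ ∫ s in a..m, p * f s * φ s ^ (1 - 1/p) := by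
        rw [hφ m]
        exact intervalIntegral.integral_mono_ae ham.le (hgi a m) hintR (hineq p hp)
      have h2 : (∫ s in a..m, p * f s * φ s ^ (1 - 1/p))
          ≤ ∫ s in a..m, p * (f s * (1/4 + F s) ^ (p-1)) := by
        apply intervalIntegral.integral_mono_on ham.le hintR hintR2
        intro s hs
        have hφG : φ s ≤ G s := hle s hs
        have hr : φ s ^ (1 - 1/p) ≤ G s ^ (1 - 1/p) :=
          Real.rpow_le_rpow (hφ0 s) hφG he.le
        have hGe : G s ^ (1 - 1/p) = (1/4 + F s) ^ (p-1) := by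
          rw [hGdef]
          rw [← Real.rpow_mul (by have := hF0 s hs.1; linarith : (0:ℝ) ≤ 1/4 + F s)]
          congr 1
          field_simp
        rw [hGe] at hr
        calc p * f s * φ s ^ (1 - 1/p) ≤ p * f s * (1/4 + F s) ^ (p-1) :=
              mul_le_mul_of_nonneg_left hr (mul_nonneg hppos.le (hf0 s))
          _ = p * (f s * (1/4 + F s) ^ (p-1)) := by ring
      have h3 : (∫ s in a..m, p * (f s * (1/4 + F s) ^ (p-1)))
          = p * ∫ s in a..m, f s * (1/4 + F s) ^ (p-1) :=
        intervalIntegral.integral_const_mul _ _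
      have h4 : (∫ s in a..m, f s * (1/4 + F s) ^ (p-1))
          ≤ ((1/4 + F m) ^ p - (1/4 : ℝ) ^ p) / p := by
        have hk := key_integral f a m (1/4) (p-1) ham.le (by norm_num) (by linarith) hf0 hfi
        have hpe : p - 1 + 1 = p := by ring
        rw [hpe] at hk
        exact hk
      have h5 : p * (((1/4 + F m) ^ p - (1/4 : ℝ) ^ p) / p) = G m - (1/4 : ℝ) ^ p := by
        rw [hGdef]
        field_simp
      have h6 : (0:ℝ) < (1/4 : ℝ) ^ p := Real.rpow_pos_of_pos (by norm_num) p
      have h7 : p * (∫ s in a..m, f s * (1/4 + F s) ^ (p-1))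
          ≤ p * (((1/4 + F m) ^ p - (1/4 : ℝ) ^ p) / p) :=
        mul_le_mul_of_nonneg_left h4 hppos.le
      rw [h5] at h7
      rw [h3] at h2
      linarith
    -- conclude
    have hFt : F t ≤ 1/2 := le_trans (hFmono t b ht.2) hsmall
    have hGle : G t ≤ (3/4 : ℝ) ^ p :=
      Real.rpow_le_rpow (by have := hF0 t ht.1; linarith) (by linarith) hppos.le
    exact le_trans (hlt t ht).le hGle
  -- let p → ∞
  intro t ht
  have htend : Tendsto (fun n : ℕ => ((3/4:ℝ)) ^ (p₀ + (n:ℝ))) atTop (𝓝 0) := by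
    have heq : ∀ n : ℕ, ((3/4:ℝ)) ^ (p₀ + (n:ℝ)) = (3/4:ℝ) ^ p₀ * ((3/4:ℝ)) ^ (n:ℕ) := by
      intro n
      rw [Real.rpow_add (by norm_num), Real.rpow_natCast]
    simp only [heq]
    have := (tendsto_pow_atTop_nhds_zero_of_lt_one (by norm_num : (0:ℝ) ≤ 3/4)
      (by norm_num : (3/4:ℝ) < 1)).const_mul ((3/4:ℝ) ^ p₀)
    simpa using this
  have hle0 : φ t ≤ 0 := by
    refine ge_of_tendsto htend (Eventually.of_forall fun n => ?_)
    exact hkey (p₀ + n) (by linarith [Nat.cast_nonneg (α := ℝ) n]) t ht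
  linarith [hφ0 t]

/-- if the Yudovich differential inequality `φ' ≤ p f φ^{1−1/p}` holds
a.e. on `[0,T]` for every sufficiently large `p` (with `f ∈ L¹(0,T)` nonnegative,
independent of `p`), `φ` absolutely continuous (expressed via FTC) and `φ(0) = 0`, then
`φ ≡ 0` on `[0,T]`. -/
theorem stmt13 (T : ℝ) (hT : 0 < T)
    (φ f g : ℝ → ℝ)
    (hφ0 : ∀ t ∈ Icc 0 T, 0 ≤ φ t)
    (hf0 : ∀ t ∈ Icc 0 T, 0 ≤ f t)
    (hfint : IntegrableOn f (Icc 0 T) volume)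
    (hgint : IntegrableOn g (Icc 0 T) volume)
    (hFTC : ∀ t ∈ Icc 0 T, φ t = ∫ s in (0:ℝ)..t, g s)
    (hineq : ∃ p₀ : ℝ, 2 ≤ p₀ ∧ ∀ p : ℝ, p₀ ≤ p →
      ∀ᵐ s ∂(volume.restrict (Icc 0 T)), g s ≤ p * f s * φ s ^ (1 - 1/p)) :
    ∀ t ∈ Icc 0 T, φ t = 0 := by
  obtain ⟨p₀, hp₀2, hp₀⟩ := hineq
  set fe : ℝ → ℝ := (Icc 0 T).indicator f with hfedef
  set ge : ℝ → ℝ := (Icc 0 T).indicator g with hgedef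
  set φe : ℝ → ℝ := fun t => ∫ s in (0:ℝ)..t, ge s with hφedef
  have hfe0 : ∀ x, 0 ≤ fe x := fun x => Set.indicator_nonneg (fun y hy => hf0 y hy) x
  have hfei : ∀ x y, IntervalIntegrable fe volume x y :=
    fun x y => (hfint.integrable_indicator measurableSet_Icc).intervalIntegrable
  have hgei : ∀ x y, IntervalIntegrable ge volume x y :=
    fun x y => (hgint.integrable_indicator measurableSet_Icc).intervalIntegrable
  -- indicator integrals agree inside [0, T]
  have hind : ∀ (h : ℝ → ℝ) (x y : ℝ), 0 ≤ x → y ≤ T → x ≤ y →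
      (∫ s in x..y, (Icc 0 T).indicator h s) = ∫ s in x..y, h s := by
    intro h x y hx hy hxy
    rw [intervalIntegral.integral_of_le hxy, intervalIntegral.integral_of_le hxy,
      MeasureTheory.setIntegral_indicator measurableSet_Icc]
    congr 1
    rw [Set.inter_eq_self_of_subset_left]
    intro s hs
    exact ⟨le_trans hx hs.1.le, hs.2.trans hy⟩
  have hφe_eq : ∀ t ∈ Icc 0 T, φe t = φ t := by
    intro t ht
    rw [hφedef]
    simp only
    rw [hind g 0 t le_rfl ht.2 ht.1, hFTC t ht]
  have hφe00 : φe 0 = 0 := by simp [hφedef]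
  have hφecont : Continuous φe := intervalIntegral.continuous_primitive hgei 0
  have hφeT : ∀ t, T ≤ t → φe t = φe T := by
    intro t htT
    have h1 : (∫ s in (0:ℝ)..T, ge s) + ∫ s in T..t, ge s = ∫ s in (0:ℝ)..t, ge s :=
      intervalIntegral.integral_add_adjacent_intervals (hgei 0 T) (hgei T t)
    have h2 : (∫ s in T..t, ge s) = 0 := by
      rw [intervalIntegral.integral_of_le htT, hgedef]
      rw [MeasureTheory.setIntegral_indicator measurableSet_Icc]
      apply MeasureTheory.setIntegral_measure_zero
      have hsub : Ioc T t ∩ Icc 0 T ⊆ (∅ : Set ℝ) := by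
        rintro s ⟨hs1, hs2⟩
        exact absurd hs2.2 (not_le.2 hs1.1)
      simpa using measure_mono_null hsub (by simp)
    show (∫ s in (0:ℝ)..t, ge s) = ∫ s in (0:ℝ)..T, ge s
    linarith
  have hφe0 : ∀ x, 0 ≤ φe x := by
    intro x
    rcases le_or_gt x 0 with hx | hx
    · have : φe x = 0 := by
        rw [hφedef]
        simp only
        rw [intervalIntegral.integral_symm x 0]
        rw [intervalIntegral.integral_of_le hx, hgedef,
          MeasureTheory.setIntegral_indicator measurableSet_Icc]
        have h0 : (∫ s in Ioc x 0 ∩ Icc 0 T, g s) = 0 := by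
          apply MeasureTheory.setIntegral_measure_zero
          have hsub : Ioc x 0 ∩ Icc 0 T ⊆ ({0} : Set ℝ) := by
            rintro s ⟨hs1, hs2⟩
            exact Set.mem_singleton_iff.2 (le_antisymm hs1.2 hs2.1)
          exact measure_mono_null hsub Real.volume_singleton
        rw [h0, neg_zero]
      linarith [this.ge]
    · rcases le_or_gt x T with hxT | hxT
      · rw [hφe_eq x ⟨hx.le, hxT⟩]
        exact hφ0 x ⟨hx.le, hxT⟩
      · rw [hφeT x hxT.le, hφe_eq T ⟨hT.le, le_rfl⟩]
        exact hφ0 T ⟨hT.le, le_rfl⟩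
  -- transfer a.e. inequality
  have hineq' : ∀ p : ℝ, p₀ ≤ p → ∀ᵐ s : ℝ, ge s ≤ p * fe s * φe s ^ (1 - 1/p) := by
    intro p hp
    have h1 := hp₀ p hp
    rw [MeasureTheory.ae_restrict_iff' measurableSet_Icc] at h1
    filter_upwards [h1] with s hs
    by_cases hmem : s ∈ Icc 0 T
    · have h2 := hs hmem
      rw [hgedef, hfedef]
      simpa [Set.indicator_of_mem hmem, hφe_eq s hmem] using h2
    · rw [hgedef, hfedef]
      simp [Set.indicator_of_notMem hmem]
  -- the inductive set
  set A : Set ℝ := {t | t ∈ Icc 0 T ∧ ∀ s ∈ Icc 0 t, φe s = 0} with hAdef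
  have h0A : (0:ℝ) ∈ A := by
    refine ⟨⟨le_rfl, hT.le⟩, ?_⟩
    intro s hs
    have : s = 0 := le_antisymm hs.2 hs.1
    rw [this]; exact hφe00
  have hAbdd : BddAbove A := ⟨T, fun x hx => hx.1.2⟩
  set τ := sSup A with hτdef
  have hτ0 : 0 ≤ τ := le_csSup hAbdd h0A
  have hτT : τ ≤ T := csSup_le ⟨0, h0A⟩ (fun x hx => hx.1.2)
  have hzero_lt : ∀ s, 0 ≤ s → s < τ → φe s = 0 := by
    intro s hs hsτ
    obtain ⟨x, hxA, hsx⟩ := exists_lt_of_lt_csSup ⟨0, h0A⟩ hsτ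
    exact hxA.2 s ⟨hs, hsx.le⟩
  have hφeτ : φe τ = 0 := by
    rcases eq_or_lt_of_le hτ0 with heq | hpos
    · rw [← heq]; exact hφe00
    · have htend : Tendsto φe (𝓝[<] τ) (𝓝 (φe τ)) :=
        (hφecont.tendsto τ).mono_left nhdsWithin_le_nhds
      have hev : φe =ᶠ[𝓝[<] τ] fun _ => 0 := by
        filter_upwards [Ioo_mem_nhdsLT_of_mem (Set.mem_Ioc.2 ⟨hpos, le_rfl⟩)] with x hx
        exact hzero_lt x hx.1.le hx.2
      have h2 : Tendsto φe (𝓝[<] τ) (𝓝 0) := by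
        rw [tendsto_congr' hev]; exact tendsto_const_nhds
      exact tendsto_nhds_unique htend h2
  have hτA : ∀ s ∈ Icc 0 τ, φe s = 0 := by
    intro s hs
    rcases lt_or_eq_of_le hs.2 with h | h
    · exact hzero_lt s hs.1 h
    · rw [h]; exact hφeτ
  have hτeq : τ = T := by
    by_contra hne
    have hτltT : τ < T := lt_of_le_of_ne hτT hne
    have hFτcont : Continuous (fun x => ∫ s in τ..x, fe s) :=
      intervalIntegral.continuous_primitive hfei τ
    obtain ⟨δ, hδpos, hδ⟩ := Metric.continuousAt_iff.1 hFτcont.continuousAt (1/2) (by norm_num)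
    set b := min T (τ + δ/2) with hbdef
    have hτb : τ < b := lt_min hτltT (by linarith)
    have hbT : b ≤ T := min_le_left _ _
    have hdist : dist b τ < δ := by
      rw [Real.dist_eq, abs_of_nonneg (by linarith : (0:ℝ) ≤ b - τ)]
      have : b ≤ τ + δ/2 := min_le_right _ _
      linarith
    have hsmall : (∫ s in τ..b, fe s) ≤ 1/2 := by
      have h1 := hδ hdist
      rw [intervalIntegral.integral_same, Real.dist_eq, sub_zero] at h1
      exact (abs_lt.1 h1).2.le
    have hφshift : ∀ t, φe t = ∫ s in τ..t, ge s := by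
      intro t
      have h1 : (∫ s in (0:ℝ)..τ, ge s) + ∫ s in τ..t, ge s = ∫ s in (0:ℝ)..t, ge s :=
        intervalIntegral.integral_add_adjacent_intervals (hgei 0 τ) (hgei τ t)
      have h2 : (∫ s in (0:ℝ)..τ, ge s) = 0 := hφeτ
      show (∫ s in (0:ℝ)..t, ge s) = ∫ s in τ..t, ge s
      linarith
    have hz := zero_of_small fe ge φe τ b p₀ hτb.le hp₀2 hfe0 hφe0 hfei hgei hφshift
      hsmall hineq'
    have hbA : b ∈ A := by
      refine ⟨⟨le_trans hτ0 hτb.le, hbT⟩, ?_⟩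
      intro s hs
      rcases le_or_gt s τ with h | h
      · exact hτA s ⟨hs.1, h⟩
      · exact hz s ⟨h.le, hs.2⟩
    have := le_csSup hAbdd hbA
    linarith
  intro t ht
  rw [← hφe_eq t ht]
  exact hτA t ⟨ht.1, hτeq ▸ ht.2⟩
end

section
/- Every bounded C-uniform domain Ω ⊂ ℝ^d contains a cube Q₀ from its Whitney decomposition such that Q₀ ⊆ Ω ⊆ C' Q₀, where C' depends only on C and d, and λQ denotes the concentric dilate of Q by factor λ. -/
open MeasureTheory Metric Set

/-- A `C`-uniform domain: any two points are joined by a curve in `Ω` of length at most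
`C|x−y|` along which the "crescent" ball condition holds. -/
def IsUniformDomain {d : ℕ} (C : ℝ) (Ω : Set (EuclideanSpace ℝ (Fin d))) : Prop :=
  ∀ x ∈ Ω, ∀ y ∈ Ω, ∃ γ : ℝ → EuclideanSpace ℝ (Fin d),
    ContinuousOn γ (Icc 0 1) ∧ γ 0 = x ∧ γ 1 = y ∧
    (∀ t ∈ Icc (0:ℝ) 1, γ t ∈ Ω) ∧
    eVariationOn γ (Icc 0 1) ≤ ENNReal.ofReal (C * dist x y) ∧
    ∀ t ∈ Icc (0:ℝ) 1, ball (γ t) (min (dist x (γ t)) (dist y (γ t)) / C) ⊆ Ω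

/-- The half-open dyadic cube `∏ᵢ [aᵢ 2ⁿ, (aᵢ+1) 2ⁿ)` in `ℝ^d`. -/
def dyadicCube (d : ℕ) (n : ℤ) (a : Fin d → ℤ) : Set (EuclideanSpace ℝ (Fin d)) :=
  {x | ∀ i, (a i : ℝ) * 2 ^ n ≤ x i ∧ x i < ((a i : ℝ) + 1) * 2 ^ n}

/-- The concentric dilate `λQ` of the dyadic cube `Q = Q(n,a)` by a factor `λ`. -/
def dilatedCube (d : ℕ) (lam : ℝ) (n : ℤ) (a : Fin d → ℤ) : Set (EuclideanSpace ℝ (Fin d)) :=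
  {x | ∀ i, |x i - ((a i : ℝ) + 1/2) * 2 ^ n| ≤ lam * 2 ^ n / 2}

/-- A Whitney decomposition of `Ω` with comparability constants `c₁ ≤ c₂`: a family of
dyadic cubes with pairwise disjoint interiors covering `Ω`, whose side lengths are
comparable to the distance to `∂Ω`. -/
def IsWhitneyDecomposition {d : ℕ} (c₁ c₂ : ℝ) (W : Set (ℤ × (Fin d → ℤ)))
    (Ω : Set (EuclideanSpace ℝ (Fin d))) : Prop :=
  (∀ q ∈ W, dyadicCube d q.1 q.2 ⊆ Ω) ∧
  (∀ q ∈ W, ∀ q' ∈ W, q ≠ q' →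
    Disjoint (interior (dyadicCube d q.1 q.2)) (interior (dyadicCube d q'.1 q'.2))) ∧
  (⋃ q ∈ W, dyadicCube d q.1 q.2) = Ω ∧
  ∀ q ∈ W, ∀ x ∈ dyadicCube d q.1 q.2,
    c₁ * 2 ^ q.1 ≤ infDist x Ωᶜ ∧ infDist x Ωᶜ ≤ c₂ * 2 ^ q.1

/-- every bounded `C`-uniform domain `Ω ⊆ ℝ^d` contains a cube `Q₀` of
its Whitney decomposition with `Q₀ ⊆ Ω ⊆ C'Q₀`, where `C'` depends only on `C`, `d`
(and the Whitney comparability constants). -/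
theorem stmt14 (d : ℕ) (hd : 1 ≤ d) (C c₁ c₂ : ℝ) (hC : 0 < C) (hc₁ : 0 < c₁)
    (hc : c₁ ≤ c₂) :
    ∃ C' > 0, ∀ Ω : Set (EuclideanSpace ℝ (Fin d)),
      IsOpen Ω → Ω.Nonempty → Bornology.IsBounded Ω → IsUniformDomain C Ω →
      ∀ W : Set (ℤ × (Fin d → ℤ)), IsWhitneyDecomposition c₁ c₂ W Ω →
      ∃ q ∈ W, dyadicCube d q.1 q.2 ⊆ Ω ∧ Ω ⊆ dilatedCube d C' q.1 q.2 := by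
  have hc₂ : 0 < c₂ := hc₁.trans_le hc
  refine ⟨1 + 8 * C * c₂, by nlinarith, ?_⟩
  intro Ω hopen hne hbdd huni W hW
  obtain ⟨p, hp⟩ := hne
  obtain ⟨h1, _h2, h3, h4⟩ := hW
  -- choose x, y nearly realizing the diameter
  obtain ⟨x, hx, y, hy, hxy⟩ : ∃ x ∈ Ω, ∃ y ∈ Ω, diam Ω ≤ 2 * dist x y := by
    rcases le_or_gt (diam Ω) 0 with h | h
    · exact ⟨p, hp, p, hp, by simpa using h⟩
    · by_contra hcon
      push_neg at hcon
      have hle : diam Ω ≤ diam Ω / 2 := by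
        apply diam_le_of_forall_dist_le (by linarith)
        intro a ha b hb
        have := hcon a ha b hb
        linarith
      linarith
  -- the curve from the uniform condition
  obtain ⟨γ, hcont, hγ0, hγ1, hmem, -, hball⟩ := huni x hx y hy
  -- find a "midpoint" of the curve by IVT
  have hfx : ContinuousOn (fun t => dist x (γ t)) (Icc (0:ℝ) 1) :=
    (Continuous.dist continuous_const continuous_id).comp_continuousOn hcont
  have hfy : ContinuousOn (fun t => dist y (γ t)) (Icc (0:ℝ) 1) :=
    (Continuous.dist continuous_const continuous_id).comp_continuousOn hcont
  have hf : ContinuousOn (fun t => dist x (γ t) - dist y (γ t)) (Icc (0:ℝ) 1) :=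
    hfx.sub hfy
  have h0mem : (0:ℝ) ∈ Icc (dist x (γ 0) - dist y (γ 0)) (dist x (γ 1) - dist y (γ 1)) := by
    rw [hγ0, hγ1]
    constructor
    · simpa using dist_nonneg
    · simpa using dist_nonneg
  obtain ⟨t, ht, hteq⟩ := intermediate_value_Icc (zero_le_one) hf h0mem
  set z := γ t with hz_def
  have hz : z ∈ Ω := hmem t ht
  have heq : dist x z = dist y z := by
    have : dist x (γ t) - dist y (γ t) = 0 := hteq
    simp only [← hz_def] at this
    linarith
  -- the ball around z of radius |x-y|/(2C) lies in Ω
  have hsub : ball z (dist x y / (2 * C)) ⊆ Ω := by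
    refine Subset.trans (ball_subset_ball ?_) (hball t ht)
    have htri : dist x y ≤ dist x z + dist z y := dist_triangle x z y
    rw [dist_comm z y] at htri
    rw [← hz_def, min_eq_left heq.le]
    rw [div_le_div_iff₀ (by positivity) hC]
    nlinarith
  -- the complement of Ω is nonempty
  have hcompl : Ωᶜ.Nonempty := by
    rw [nonempty_compl]
    intro hcontra
    haveI : Nonempty (Fin d) := ⟨⟨0, hd⟩⟩
    haveI : Nontrivial (EuclideanSpace ℝ (Fin d)) := by
      refine nontrivial_of_ne (EuclideanSpace.single ⟨0, hd⟩ (1:ℝ)) 0 ?_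
      intro h
      have := congrArg norm h
      rw [EuclideanSpace.norm_single] at this
      simp at this
    exact NormedSpace.unbounded_univ ℝ _ (hcontra ▸ hbdd)
  -- hence infDist z Ωᶜ ≥ |x-y|/(2C)
  have hinf : dist x y / (2 * C) ≤ infDist z Ωᶜ := by
    by_contra hlt
    push_neg at hlt
    obtain ⟨w, hw, hwd⟩ := (infDist_lt_iff hcompl).mp hlt
    exact hw (hsub (by rwa [mem_ball, dist_comm]))
  -- find the Whitney cube containing z
  have hz' : z ∈ ⋃ q ∈ W, dyadicCube d q.1 q.2 := h3.symm ▸ hz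
  simp only [mem_iUnion] at hz'
  obtain ⟨q, hqW, hzq⟩ := hz'
  obtain ⟨hlow, hhigh⟩ := h4 q hqW z hzq
  have hpow : (0:ℝ) < 2 ^ q.1 := zpow_pos two_pos _
  have hDn : dist x y ≤ 2 * C * c₂ * 2 ^ q.1 := by
    have h' : dist x y / (2 * C) ≤ c₂ * 2 ^ q.1 := hinf.trans hhigh
    rw [div_le_iff₀ (by positivity)] at h'
    nlinarith
  refine ⟨q, hqW, h1 q hqW, ?_⟩
  intro w hw
  intro i
  -- coordinate estimate
  have hcoord : |w i - z i| ≤ dist w z := by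
    have h1' : |w i - z i| = Real.sqrt (dist (w i) (z i) ^ 2) := by
      rw [Real.sqrt_sq dist_nonneg, Real.dist_eq]
    rw [EuclideanSpace.dist_eq, h1']
    apply Real.sqrt_le_sqrt
    exact Finset.single_le_sum (f := fun j => dist (w j) (z j) ^ 2) (fun j _ => sq_nonneg _) (Finset.mem_univ i)
  have hwz : dist w z ≤ diam Ω := dist_le_diam_of_mem hbdd hw hz
  have hzi := hzq i
  have hzc : |z i - ((q.2 i : ℝ) + 1/2) * 2 ^ q.1| ≤ 2 ^ q.1 / 2 := by
    rw [abs_le]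
    constructor <;> nlinarith [hzi.1, hzi.2]
  have htri2 : |w i - ((q.2 i : ℝ) + 1/2) * 2 ^ q.1| ≤ |w i - z i| +
      |z i - ((q.2 i : ℝ) + 1/2) * 2 ^ q.1| := abs_sub_le _ _ _
  have : |w i - ((q.2 i : ℝ) + 1/2) * 2 ^ q.1| ≤ (1 + 8 * C * c₂) * 2 ^ q.1 / 2 := by
    nlinarith
  exact this
end
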